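/- For every positive integer n and every real number u with |u| > 1, the series Σ_{k=0}^∞ u^{−k} d_k(n) converges and equals (u/(u−1)) · Σ_{k=0}^{⌊log₂ n⌋} (u−1)^{−k} f_k(n), where d_k(n) = f_k(n,1) and f_k(n) = f_k(n,2). -/

import Mathlib

open Finset

/-- `f k n l` is the number of ordered `k`-tuples `(i₁, …, i_k)` of integers
with each `i_j ≥ l` and `i₁ ⋯ i_k = n`.  (For `n ≥ 1` and `l ≥ 1` every such
factor lies in `[l, n]`, and for `k = 0` this gives `1` if `n = 1` and `0` otherwise.) -/
def f (k n l : ℕ) : ℕ :=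
  ((Fintype.piFinset fun _ : Fin k => Finset.Icc l n).filter
    fun v => ∏ i, v i = n).card

/-- `F k x l = ∑_{n ≤ x} f k n l`; it equals `0` for `x < 1` and `F 0 x l = 1` for `x ≥ 1`. -/
noncomputable def F (k : ℕ) (x : ℝ) (l : ℕ) : ℕ :=
  ∑ n ∈ Finset.Icc 1 ⌊x⌋₊, f k n l

/-!
Marking the positions of the factors `≥ 2` in a `k`-tuple counted by `d_k(n)` gives
`d_k(n) = ∑_j C(k, j) f_j(n)`, and only `j ≤ log₂ n` contribute because `f_j(n) = 0` for
`n < 2^j`. The sum over `j` being finite, it can be exchanged with the series, which leaves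
`∑_k C(k, j) u^{-k} = (u / (u - 1)) (u - 1)^{-j}`, the `j`-th derivative of the geometric series.
-/

lemma mem_filter_piFinset_Icc_iff {k n l : ℕ} (hn : 0 < n) {v : Fin k → ℕ} :
    v ∈ (Fintype.piFinset fun _ : Fin k => Icc l n).filter (fun v => ∏ i, v i = n) ↔
      (∀ i, l ≤ v i) ∧ ∏ i, v i = n := by
  simp only [mem_filter, Fintype.mem_piFinset, mem_Icc]
  refine ⟨fun h => ⟨fun i => (h.1 i).1, h.2⟩, fun ⟨hl, hprod⟩ => ⟨fun i => ⟨hl i, ?_⟩, hprod⟩⟩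
  exact Nat.le_of_dvd hn (hprod ▸ dvd_prod_of_mem _ (mem_univ i))

lemma f_zero (n l : ℕ) : f 0 n l = if n = 1 then 1 else 0 := by
  rcases eq_or_ne n 1 with h | h <;> simp [f, eq_comm, h]

lemma f_succ (k l : ℕ) {n : ℕ} (hn : 0 < n) :
    f (k + 1) n l = ∑ d ∈ n.divisors with l ≤ d, f k (n / d) l := by
  have hquot : ∀ {d}, d ∣ n → 0 < n / d := fun hd =>
    Nat.div_pos (Nat.le_of_dvd hn hd) (Nat.pos_of_dvd_of_pos hd hn)
  simp only [f, ← card_sigma]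
  refine card_bij' (fun v _ => ⟨v 0, Fin.tail v⟩) (fun p _ => Fin.cons p.1 p.2) ?_ ?_
    (fun v _ => Fin.cons_self_tail v) (fun p _ => by simp)
  · intro v hv
    rw [mem_filter_piFinset_Icc_iff hn, Fin.prod_univ_succ] at hv
    obtain ⟨hl, hprod⟩ := hv
    have hdvd : v 0 ∣ n := Dvd.intro _ hprod
    have hq : ∏ i, Fin.tail v i = n / v 0 := by
      rw [← hprod, Nat.mul_div_cancel_left _ (Nat.pos_of_dvd_of_pos hdvd hn)]; rfl
    rw [mem_sigma, mem_filter, Nat.mem_divisors, mem_filter_piFinset_Icc_iff (hquot hdvd)]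
    exact ⟨⟨⟨hdvd, hn.ne'⟩, hl 0⟩, fun i => hl i.succ, hq⟩
  · rintro ⟨d, w⟩ hp
    rw [mem_sigma, mem_filter, Nat.mem_divisors] at hp
    obtain ⟨⟨⟨hdvd, -⟩, hld⟩, hw⟩ := hp
    rw [mem_filter_piFinset_Icc_iff (hquot hdvd)] at hw
    rw [mem_filter_piFinset_Icc_iff hn, Fin.prod_univ_succ]
    simp only [Fin.cons_zero, Fin.cons_succ, hw.2, Nat.mul_div_cancel' hdvd, and_true]
    exact Fin.cases hld hw.1

lemma f_eq_zero_of_lt_pow {k n l : ℕ} (h : n < l ^ k) : f k n l = 0 := by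
  rw [f, card_eq_zero, filter_eq_empty_iff]
  intro v hv hprod
  simp only [Fintype.mem_piFinset, mem_Icc] at hv
  refine h.not_ge ?_
  calc l ^ k = ∏ _i : Fin k, l := by simp
    _ ≤ ∏ i, v i := prod_le_prod' fun i _ => (hv i).1
    _ = n := hprod

lemma sum_range_succ_choose_smul {M : Type*} [AddCommMonoid M] (a : ℕ → M) (k : ℕ) :
    ∑ j ∈ range (k + 2), (k + 1).choose j • a j =
      ∑ j ∈ range (k + 1), k.choose j • a j + ∑ j ∈ range (k + 1), k.choose j • a (j + 1) := by
  have hlast : ∑ j ∈ range (k + 2), k.choose j • a j = ∑ j ∈ range (k + 1), k.choose j • a j := by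
    simp [sum_range_succ _ (k + 1)]
  rw [sum_range_succ', ← hlast, sum_range_succ' _ (k + 1)]
  simp only [Nat.choose_succ_succ', add_smul, sum_add_distrib, Nat.choose_zero_right]
  abel

lemma f_succ_one (k : ℕ) {n : ℕ} (hn : 0 < n) :
    f (k + 1) n 1 = f k n 1 + ∑ d ∈ n.divisors with 2 ≤ d, f k (n / d) 1 := by
  have hsplit : {d ∈ n.divisors | 1 ≤ d} = insert 1 {d ∈ n.divisors | 2 ≤ d} := by
    ext d
    simp only [mem_insert, mem_filter, Nat.mem_divisors]
    rcases Nat.lt_or_ge d 2 with hd | hd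
    · interval_cases d <;> simp [hn.ne']
    · simp [hd, show d ≠ 1 by omega, show 1 ≤ d by omega]
  rw [f_succ k 1 hn, hsplit, sum_insert (by simp), Nat.div_one]

theorem f_one_eq_sum_choose_mul_f_two (k : ℕ) {n : ℕ} (hn : 0 < n) :
    f k n 1 = ∑ j ∈ range (k + 1), k.choose j * f j n 2 := by
  induction k generalizing n with
  | zero => simp [f_zero]
  | succ k ih =>
    have hquot : ∀ d ∈ n.divisors, 0 < n / d := fun d hd =>
      Nat.div_pos (Nat.divisor_le hd) (Nat.pos_of_mem_divisors hd)
    rw [f_succ_one k hn, ih hn, sum_congr rfl fun d hd => ih (hquot d (mem_filter.1 hd).1),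
      sum_comm]
    simp only [← mul_sum, ← f_succ _ 2 hn]
    exact (sum_range_succ_choose_smul (fun j => f j n 2) k).symm

theorem f_one_eq_sum_range_log (k : ℕ) {n : ℕ} (hn : 0 < n) :
    f k n 1 = ∑ j ∈ range (Nat.log 2 n + 1), k.choose j * f j n 2 := by
  have hchoose : ∀ j ≥ k + 1, k.choose j * f j n 2 = 0 := fun j hj => by
    rw [Nat.choose_eq_zero_of_lt hj, zero_mul]
  have hf : ∀ j ≥ Nat.log 2 n + 1, k.choose j * f j n 2 = 0 := fun j hj => by
    rw [f_eq_zero_of_lt_pow ((Nat.lt_pow_succ_log_self one_lt_two n).trans_le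
      (Nat.pow_le_pow_right two_pos hj)), mul_zero]
  rw [f_one_eq_sum_choose_mul_f_two k hn,
    ← eventually_constant_sum hchoose (n := k + Nat.log 2 n + 1) (by omega),
    eventually_constant_sum hf (by omega)]

lemma hasSum_choose_mul_pow {𝕜 : Type*} [NormedField 𝕜] [CompleteSpace 𝕜] (j : ℕ) {r : 𝕜}
    (hr : ‖r‖ < 1) :
    HasSum (fun k : ℕ => (k.choose j : 𝕜) * r ^ k) (r ^ j / (1 - r) ^ (j + 1)) := by
  have hinitial : ∑ k ∈ range j, (k.choose j : 𝕜) * r ^ k = 0 :=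
    sum_eq_zero fun k hk => by simp [Nat.choose_eq_zero_of_lt (mem_range.1 hk)]
  have hshift := (hasSum_choose_mul_geometric_of_norm_lt_one j hr).mul_left (r ^ j)
  rw [← div_eq_mul_one_div] at hshift
  rw [← add_zero (r ^ j / _), ← hinitial, ← hasSum_nat_add_iff]
  refine hshift.congr_fun fun k => ?_
  rw [add_comm k]
  ring

lemma hasSum_choose_mul_zpow_neg (j : ℕ) {u : ℝ} (hu : 1 < |u|) :
    HasSum (fun k : ℕ => (k.choose j : ℝ) * u ^ (-(k : ℤ)))
      (u / (u - 1) * (u - 1) ^ (-(j : ℤ))) := by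
  have hu0 : u ≠ 0 := by rintro rfl; norm_num at hu
  have hu1 : u - 1 ≠ 0 := by
    intro h; rw [show u = 1 by linarith] at hu; norm_num at hu
  have hr : ‖u⁻¹‖ < 1 := by rw [norm_inv, Real.norm_eq_abs]; exact inv_lt_one_of_one_lt₀ hu
  have hvalue : u / (u - 1) * (u - 1) ^ (-(j : ℤ)) = u⁻¹ ^ j / (1 - u⁻¹) ^ (j + 1) := by
    rw [zpow_neg, zpow_natCast, show 1 - u⁻¹ = (u - 1) / u by field_simp, div_pow, inv_pow]
    field_simp
    ring
  rw [hvalue]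
  exact (hasSum_choose_mul_pow j hr).congr_fun fun k => by rw [zpow_neg, zpow_natCast, inv_pow]

theorem stmt17 (n : ℕ) (hn : 0 < n) (u : ℝ) (hu : 1 < |u|) :
    HasSum (fun k : ℕ => u ^ (-(k : ℤ)) * (f k n 1 : ℝ))
      (u / (u - 1) *
        ∑ k ∈ Finset.range (Nat.log 2 n + 1),
          (u - 1) ^ (-(k : ℤ)) * (f k n 2 : ℝ)) := by
  have hvalue :
      u / (u - 1) * ∑ j ∈ range (Nat.log 2 n + 1), (u - 1) ^ (-(j : ℤ)) * (f j n 2 : ℝ) =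
        ∑ j ∈ range (Nat.log 2 n + 1), (f j n 2 : ℝ) * (u / (u - 1) * (u - 1) ^ (-(j : ℤ))) := by
    rw [mul_sum]
    exact sum_congr rfl fun j _ => by ring
  rw [hvalue]
  refine (hasSum_sum fun j _ =>
    (hasSum_choose_mul_zpow_neg j hu).mul_left (f j n 2 : ℝ)).congr_fun fun k => ?_
  rw [f_one_eq_sum_range_log k hn]
  push_cast
  rw [mul_sum]
  exact sum_congr rfl fun j _ => by ring
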